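/- Let F, G : ℤ → ℝ be supported on {-n,...,n-1} with DFTs a_k, ã_k on {-n,...,n-1}, both nonvanishing. If the bispectra agree, i.e., ã_{k₁} ã_{k₂} ã_{-k₁-k₂} = a_{k₁} a_{k₂} a_{-k₁-k₂} for all k₁,k₂ ∈ {-n,...,n-1} (indices mod 2n), then there exists τ ∈ {-n,...,n-1} such that G = F_τ, i.e., G is a cyclic shift of F on its support. -/

import Mathlib

open Complex

/-- Representative of `a` modulo `2n` taken in `{-n,...,n-1}`. -/
def crep (n a : ℤ) : ℤ := (a + n) % (2 * n) - n

/-- The cyclic shift `F_τ` of a signal `F` supported on `{-n,...,n-1}`. -/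
noncomputable def cyc (n : ℤ) (F : ℤ → ℝ) (τ x : ℤ) : ℝ :=
  if -n ≤ x ∧ x < n then F (crep n (x + τ)) else 0

/-- The DFT `a_k` of `F` on `{-n,...,n-1}` (the formula is `2n`-periodic
in `k`, giving the periodic extension of the index). -/
noncomputable def acoef (n : ℤ) (F : ℤ → ℝ) (k : ℤ) : ℂ :=
  ∑ x ∈ Finset.Ico (-n) n,
    (F x : ℂ) * Complex.exp (-2 * Real.pi * Complex.I * k * x / (2 * (n : ℂ)))

/-!
Identify `{-n,...,n-1}` with `ℤ/2nℤ`, so that `a_k` becomes the discrete Fourier transform of `F`.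
The ratio `h k = ã_k / a_k` then satisfies `h k₁ * h k₂ * h (-k₁ - k₂) = 1`. At `k₁ = k₂ = 0` this
makes `h 0` a real cube root of unity, so `h 0 = 1`, and then `h` is an additive character of
`ℤ/2nℤ`, i.e. `h k = exp (2πi τ k / 2n)` for some `τ`. Hence `ã` is the transform of the cyclic
shift of `F` by `τ`, and injectivity of the transform gives `G = F_τ`.
-/

open ZMod

lemma map_add_eq_mul_of_mul_mul_eq_one {A M : Type*} [AddCommGroup A] [CommMonoid M] {f : A → M}
    (h0 : f 0 = 1) (h : ∀ a b, f a * f b * f (-a - b) = 1) (a b : A) :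
    f (a + b) = f a * f b := by
  have hneg : ∀ c, f c * f (-c) = 1 := fun c ↦ by simpa [h0] using h c 0
  calc f (a + b) = f (a + b) * (f a * f b * f (-a - b)) := by rw [h, mul_one]
    _ = f (a + b) * f (-(a + b)) * (f a * f b) := by rw [neg_add', mul_comm (f a * f b)]; ac_rfl
    _ = f a * f b := by rw [hneg, one_mul]

lemma ZMod.exists_eq_mulShift_stdAddChar {N : ℕ} [NeZero N] (ψ : AddChar (ZMod N) ℂ) :
    ∃ τ : ZMod N, ψ = stdAddChar.mulShift τ := by
  obtain ⟨τ, rfl⟩ := AddChar.zmodAddEquiv.surjective ψ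
  refine ⟨τ, AddChar.ext _ _ fun k ↦ ?_⟩
  obtain ⟨τ, rfl⟩ := ZMod.intCast_surjective τ
  obtain ⟨k, rfl⟩ := ZMod.intCast_surjective k
  rw [AddChar.mulShift_apply, ← Int.cast_mul, stdAddChar_coe, AddChar.zmodAddEquiv_apply]
  change ((AddChar.zmod N τ k : Circle) : ℂ) = _
  rw [AddChar.zmod_intCast, Circle.coe_exp]
  push_cast
  ring_nf

lemma ZMod.dft_comp_add_right {N : ℕ} [NeZero N] {E : Type*} [AddCommGroup E] [Module ℂ E]
    (Φ : ZMod N → E) (τ k : ZMod N) :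
    𝓕 (fun j ↦ Φ (j + τ)) k = stdAddChar (τ * k) • 𝓕 Φ k := by
  simp only [dft_apply, Finset.smul_sum, smul_smul, ← AddChar.map_add_eq_mul]
  exact Fintype.sum_equiv (Equiv.addRight τ) _ _ fun j ↦ by simp; ring_nf

lemma ZMod.exists_translate_of_bispectrum_eq {N : ℕ} [NeZero N] {f g : ZMod N → ℝ}
    (hf : ∀ k, 𝓕 (ofReal ∘ f) k ≠ 0)
    (hfg : ∀ k₁ k₂, 𝓕 (ofReal ∘ g) k₁ * 𝓕 (ofReal ∘ g) k₂ * 𝓕 (ofReal ∘ g) (-k₁ - k₂) =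
      𝓕 (ofReal ∘ f) k₁ * 𝓕 (ofReal ∘ f) k₂ * 𝓕 (ofReal ∘ f) (-k₁ - k₂)) :
    ∃ τ, ∀ j, g j = f (j + τ) := by
  set ratio : ZMod N → ℂ := fun k ↦ 𝓕 (ofReal ∘ g) k / 𝓕 (ofReal ∘ f) k
  have hratio : ∀ k₁ k₂, ratio k₁ * ratio k₂ * ratio (-k₁ - k₂) = 1 := fun k₁ k₂ ↦ by
    simp only [ratio, div_mul_div_comm, hfg]
    exact div_self (mul_ne_zero (mul_ne_zero (hf _) (hf _)) (hf _))
  -- `ratio 0` is a real cube root of unity.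
  have hratio_zero : ratio 0 = 1 := by
    set r : ℝ := (∑ j, g j) / ∑ j, f j
    have hr : ratio 0 = r := by
      simp only [ratio, dft_apply_zero, Function.comp_apply, r]
      push_cast
      rfl
    have hcube : r ^ 3 = 1 ^ 3 := by
      have := hratio 0 0
      rw [neg_zero, sub_zero, hr] at this
      rw [one_pow, pow_three, ← mul_assoc]
      exact_mod_cast this
    rw [hr, (Nat.odd_iff.mpr rfl : Odd 3).pow_inj.mp hcube, Complex.ofReal_one]
  let ψ : AddChar (ZMod N) ℂ :=
    { toFun := ratio
      map_zero_eq_one' := hratio_zero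
      map_add_eq_mul' := map_add_eq_mul_of_mul_mul_eq_one hratio_zero hratio }
  obtain ⟨τ, hτ⟩ := exists_eq_mulShift_stdAddChar ψ
  have hdft : 𝓕 (ofReal ∘ g) = 𝓕 (fun j ↦ (ofReal ∘ f) (j + τ)) := funext fun k ↦ by
    rw [dft_comp_add_right, ← AddChar.mulShift_apply, ← hτ, smul_eq_mul]
    exact (div_mul_cancel₀ _ (hf k)).symm
  exact ⟨τ, fun j ↦ Complex.ofReal_injective (congr_fun (dft.injective hdft) j)⟩

lemma crep_mem_Ico {n : ℤ} (hn : 0 < n) (a : ℤ) : crep n a ∈ Finset.Ico (-n) n := by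
  have h1 : 0 ≤ (a + n) % (2 * n) := Int.emod_nonneg _ (by omega)
  have h2 : (a + n) % (2 * n) < 2 * n := Int.emod_lt_of_pos _ (by omega)
  simp only [crep, Finset.mem_Ico]
  omega

lemma crep_of_mem_Ico {n x : ℤ} (hx : x ∈ Finset.Ico (-n) n) : crep n x = x := by
  rw [Finset.mem_Ico] at hx
  rw [crep, Int.emod_eq_of_lt (by omega) (by omega), add_sub_cancel_right]

section ZModTransport

variable {n : ℤ} {N : ℕ}

lemma crep_eq_crep_of_intCast_eq (hN : (N : ℤ) = 2 * n) {a b : ℤ} (h : (a : ZMod N) = b) :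
    crep n a = crep n b := by
  rw [ZMod.intCast_eq_intCast_iff', hN] at h
  rw [crep, crep, (Int.ModEq.add_right n h : (a + n) % (2 * n) = (b + n) % (2 * n))]

lemma intCast_crep (hN : (N : ℤ) = 2 * n) (a : ℤ) : ((crep n a : ℤ) : ZMod N) = a := by
  rw [ZMod.intCast_eq_intCast_iff', hN]
  have h := (Int.mod_modEq (a + n) (2 * n)).sub_right n
  rwa [add_sub_cancel_right] at h

/-- For `N = 2n`: the restriction of `F` to `{-n,...,n-1}`, read as a function on `ZMod N`. -/
def zmodSignal (N : ℕ) (n : ℤ) (F : ℤ → ℝ) (j : ZMod N) : ℝ := F (crep n j.val)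

variable [NeZero N]

lemma pos_of_natCast_eq_two_mul (hN : (N : ℤ) = 2 * n) : 0 < n := by
  have := NeZero.pos N
  omega

lemma zmodSignal_intCast (hN : (N : ℤ) = 2 * n) (F : ℤ → ℝ) (x : ℤ) :
    zmodSignal N n F x = F (crep n x) := by
  rw [zmodSignal, crep_eq_crep_of_intCast_eq hN (b := x) (by simp)]

lemma zmodSignal_cyc (hN : (N : ℤ) = 2 * n) (F : ℤ → ℝ) (τ : ℤ) (j : ZMod N) :
    zmodSignal N n (cyc n F τ) j = zmodSignal N n F (j + τ) := by
  obtain ⟨x, rfl⟩ := ZMod.intCast_surjective j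
  have hn := pos_of_natCast_eq_two_mul hN
  rw [zmodSignal_intCast hN, cyc, if_pos (Finset.mem_Ico.mp (crep_mem_Ico hn x)), ← Int.cast_add,
    zmodSignal_intCast hN]
  exact congrArg F (crep_eq_crep_of_intCast_eq hN (by push_cast; rw [intCast_crep hN]))

lemma eq_of_zmodSignal_eq (hN : (N : ℤ) = 2 * n) {F G : ℤ → ℝ}
    (hF : ∀ x ∉ Finset.Ico (-n) n, F x = 0) (hG : ∀ x ∉ Finset.Ico (-n) n, G x = 0)
    (h : zmodSignal N n F = zmodSignal N n G) : F = G := funext fun x ↦ by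
  by_cases hx : x ∈ Finset.Ico (-n) n
  · simpa only [zmodSignal_intCast hN, crep_of_mem_Ico hx] using congr_fun h x
  · rw [hF x hx, hG x hx]

lemma forall_zmod_of_forall_Ico (hN : (N : ℤ) = 2 * n) {P : ZMod N → Prop}
    (h : ∀ k ∈ Finset.Ico (-n) n, P k) (j : ZMod N) : P j := by
  have hn := pos_of_natCast_eq_two_mul hN
  simpa [intCast_crep hN] using h _ (crep_mem_Ico hn j.val)

lemma acoef_eq_dft (hN : (N : ℤ) = 2 * n) (F : ℤ → ℝ) (k : ℤ) :
    acoef n F k = 𝓕 (ofReal ∘ zmodSignal N n F) k := by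
  have hn := pos_of_natCast_eq_two_mul hN
  rw [acoef, dft_apply]
  refine Finset.sum_nbij' (fun x ↦ (x : ZMod N)) (fun j ↦ crep n j.val)
    (fun _ _ ↦ Finset.mem_univ _) (fun j _ ↦ crep_mem_Ico hn _) (fun x hx ↦ ?_)
    (fun j _ ↦ by simp [intCast_crep hN]) (fun x hx ↦ ?_)
  · rw [crep_eq_crep_of_intCast_eq hN (b := x) (by simp), crep_of_mem_Ico hx]
  · rw [Function.comp_apply, zmodSignal_intCast hN, crep_of_mem_Ico hx, ← Int.cast_mul,
      ← Int.cast_neg, stdAddChar_coe, smul_eq_mul, mul_comm]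
    have hNc : (N : ℂ) = 2 * n := by exact_mod_cast hN
    rw [hNc]
    push_cast
    ring_nf

end ZModTransport

theorem stmt8_general (n : ℤ) (hn : 0 < n) (F G : ℤ → ℝ)
    (hG : ∀ x : ℤ, (x < -n ∨ n ≤ x) → G x = 0)
    (ha : ∀ k ∈ Finset.Ico (-n) n, acoef n F k ≠ 0)
    (hbispec : ∀ k₁ ∈ Finset.Ico (-n) n, ∀ k₂ ∈ Finset.Ico (-n) n,
      acoef n G k₁ * acoef n G k₂ * acoef n G (-k₁ - k₂) =
        acoef n F k₁ * acoef n F k₂ * acoef n F (-k₁ - k₂)) :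
    ∃ τ ∈ Finset.Ico (-n) n, ∀ x : ℤ, G x = cyc n F τ x := by
  obtain ⟨N, hN⟩ : ∃ N : ℕ, (N : ℤ) = 2 * n := ⟨(2 * n).toNat, by omega⟩
  have : NeZero N := ⟨by omega⟩
  have hdft := acoef_eq_dft (N := N) hN
  obtain ⟨τ, hτ⟩ := exists_translate_of_bispectrum_eq (f := zmodSignal N n F)
    (g := zmodSignal N n G)
    (forall_zmod_of_forall_Ico hN fun k hk ↦ by simpa only [hdft] using ha k hk)
    (forall_zmod_of_forall_Ico hN fun k₁ hk₁ ↦ forall_zmod_of_forall_Ico hN fun k₂ hk₂ ↦ by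
      rw [← Int.cast_neg, ← Int.cast_sub]
      simpa only [hdft] using hbispec k₁ hk₁ k₂ hk₂)
  refine ⟨crep n τ.val, crep_mem_Ico hn _, congr_fun (eq_of_zmodSignal_eq hN ?_ ?_ ?_)⟩
  · intro x hx
    simp only [Finset.mem_Ico, not_and_or, not_le, not_lt] at hx
    exact hG x hx
  · intro x hx
    rw [cyc, if_neg (by simpa only [Finset.mem_Ico] using hx)]
  · funext j
    rw [hτ, zmodSignal_cyc hN, intCast_crep hN, Int.cast_natCast, natCast_zmod_val]

theorem stmt8 (n : ℤ) (hn : 0 < n) (F G : ℤ → ℝ)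
    (hF : ∀ x : ℤ, (x < -n ∨ n ≤ x) → F x = 0)
    (hG : ∀ x : ℤ, (x < -n ∨ n ≤ x) → G x = 0)
    (ha : ∀ k ∈ Finset.Ico (-n) n, acoef n F k ≠ 0)
    (haG : ∀ k ∈ Finset.Ico (-n) n, acoef n G k ≠ 0)
    (hbispec : ∀ k₁ ∈ Finset.Ico (-n) n, ∀ k₂ ∈ Finset.Ico (-n) n,
      acoef n G k₁ * acoef n G k₂ * acoef n G (-k₁ - k₂) =
        acoef n F k₁ * acoef n F k₂ * acoef n F (-k₁ - k₂)) :
    ∃ τ ∈ Finset.Ico (-n) n, ∀ x : ℤ, G x = cyc n F τ x :=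
  stmt8_general n hn F G hG ha hbispec
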